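/- arXiv:2211.04944 — 2 statements merged into one kernel-verified Lean document; each statement's English description precedes it below -/
import Mathlib

section
/- If there exists a controlled invariant set B with B ⊆ X, then every trajectory starting in B generated by the invariance-realizing control remains in X for all time; conversely, if some control keeps all trajectories from a set S inside X forever, then the set of points reachable while staying in X from S is itself a controlled invariant subset of X. -/
/-- A set `B` is controlled invariant for the discrete-time system `x_{k+1} ∈ F x_k`. -/
def ControlledInvariant {α : Type*} (F : α → Set α) (B : Set α) : Prop :=
  ∀ x ∈ B, (F x ∩ B).Nonempty

theorem safety_iff_controlled_invariant {α : Type*} (F : α → Set α)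
    (hF : ∀ x, (F x).Nonempty) (X : Set α) (x₀ : α) :
    (∃ traj : ℕ → α, traj 0 = x₀ ∧ (∀ k, traj (k + 1) ∈ F (traj k)) ∧
      ∀ k, traj k ∈ X) ↔
    ∃ B : Set α, B ⊆ X ∧ ControlledInvariant F B ∧ x₀ ∈ B := by
  constructor
  · rintro ⟨traj, h0, hstep, hX⟩
    refine ⟨Set.range traj, ?_, ?_, ⟨0, h0⟩⟩
    · rintro _ ⟨k, rfl⟩; exact hX k
    · rintro _ ⟨k, rfl⟩
      exact ⟨traj (k + 1), hstep k, k + 1, rfl⟩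
  · rintro ⟨B, hBX, hCI, hx0⟩
    choose f hf using hCI
    let g : ℕ → {x : α // x ∈ B} := fun k =>
      Nat.rec ⟨x₀, hx0⟩ (fun _ p => ⟨f p.1 p.2, (hf p.1 p.2).2⟩) k
    refine ⟨fun k => (g k).1, rfl, fun k => (hf (g k).1 (g k).2).1, fun k => hBX (g k).2⟩
end

section
/- For two disjoint nonempty convex compact sets A, O ⊆ ℝ³, the signed distance admits the max-min characterization: sd(A,O) = max over unit vectors n of min over a ∈ A, o ∈ O of ⟪n, a - o⟫, and this value is positive. -/
open scoped RealInnerProductSpace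

set_option maxHeartbeats 1000000 in
theorem signed_distance_maxmin
    (A O : Set (EuclideanSpace ℝ (Fin 3))) (hA : A.Nonempty) (hO : O.Nonempty)
    (hAc : IsCompact A) (hOc : IsCompact O)
    (hAconv : Convex ℝ A) (hOconv : Convex ℝ O) (hdisj : A ∩ O = ∅) :
    sInf {r : ℝ | ∃ a ∈ A, ∃ o ∈ O, r = ‖a - o‖} =
      sSup {s : ℝ | ∃ nv : EuclideanSpace ℝ (Fin 3), ‖nv‖ = 1 ∧
        s = sInf {t : ℝ | ∃ a ∈ A, ∃ o ∈ O, t = ⟪nv, a - o⟫}} ∧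
    0 < sInf {r : ℝ | ∃ a ∈ A, ∃ o ∈ O, r = ‖a - o‖} := by
  classical
  -- joint minimizer of the distance
  obtain ⟨p₀, hp₀, hmin⟩ := (hAc.prod hOc).exists_isMinOn (hA.prod hO)
    ((continuous_fst.sub continuous_snd).norm.continuousOn :
      ContinuousOn (fun p : EuclideanSpace ℝ (Fin 3) × EuclideanSpace ℝ (Fin 3) => ‖p.1 - p.2‖) _)
  obtain ⟨ha₀, ho₀⟩ := hp₀
  set a₀ := p₀.1 with ha₀def
  set o₀ := p₀.2 with ho₀def
  set d : ℝ := ‖a₀ - o₀‖ with hddef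
  have hminAO : ∀ a ∈ A, ∀ o ∈ O, d ≤ ‖a - o‖ := by
    intro a ha o ho
    exact isMinOn_iff.mp hmin (a, o) (Set.mk_mem_prod ha ho)
  have hane : a₀ ≠ o₀ := by
    intro h
    have : a₀ ∈ A ∩ O := ⟨ha₀, h ▸ ho₀⟩
    simp [hdisj] at this
  have hd : 0 < d := by
    simpa [hddef, sub_eq_zero] using hane
  haveI : Nonempty A := hA.to_subtype
  haveI : Nonempty O := hO.to_subtype
  -- variational inequalities
  have hAvar : ∀ a ∈ A, ⟪a₀ - o₀, a - a₀⟫ ≥ 0 := by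
    have heq : ‖o₀ - a₀‖ = ⨅ w : A, ‖o₀ - (w : EuclideanSpace ℝ (Fin 3))‖ := by
      apply le_antisymm
      · apply le_ciInf
        intro w
        have := hminAO w w.2 o₀ ho₀
        calc ‖o₀ - a₀‖ = d := by rw [norm_sub_rev]
          _ ≤ ‖(w : EuclideanSpace ℝ (Fin 3)) - o₀‖ := this
          _ = ‖o₀ - (w : EuclideanSpace ℝ (Fin 3))‖ := norm_sub_rev _ _
      · have hbdd : BddBelow (Set.range fun w : A => ‖o₀ - (w : EuclideanSpace ℝ (Fin 3))‖) := by
          refine ⟨0, ?_⟩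
          rintro x ⟨w, rfl⟩
          exact norm_nonneg _
        exact ciInf_le hbdd ⟨a₀, ha₀⟩
    have := (norm_eq_iInf_iff_real_inner_le_zero hAconv ha₀).mp heq
    intro a ha
    have h2 := this a ha
    have : ⟪o₀ - a₀, a - a₀⟫ = -⟪a₀ - o₀, a - a₀⟫ := by
      rw [← inner_neg_left]; congr 1; abel
    linarith [this ▸ h2]
  have hOvar : ∀ o ∈ O, ⟪a₀ - o₀, o₀ - o⟫ ≥ 0 := by
    have heq : ‖a₀ - o₀‖ = ⨅ w : O, ‖a₀ - (w : EuclideanSpace ℝ (Fin 3))‖ := by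
      apply le_antisymm
      · exact le_ciInf fun w => hminAO a₀ ha₀ w w.2
      · have hbdd : BddBelow (Set.range fun w : O => ‖a₀ - (w : EuclideanSpace ℝ (Fin 3))‖) := by
          refine ⟨0, ?_⟩
          rintro x ⟨w, rfl⟩
          exact norm_nonneg _
        exact ciInf_le hbdd ⟨o₀, ho₀⟩
    have := (norm_eq_iInf_iff_real_inner_le_zero hOconv ho₀).mp heq
    intro o ho
    have h2 := this o ho
    have heq2 : ⟪a₀ - o₀, o - o₀⟫ = -⟪a₀ - o₀, o₀ - o⟫ := by
      rw [← inner_neg_right]; congr 1; abel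
    linarith [heq2 ▸ h2]
  have hkey : ∀ a ∈ A, ∀ o ∈ O, d ^ 2 ≤ ⟪a₀ - o₀, a - o⟫ := by
    intro a ha o ho
    have hsplit : a - o = (a - a₀) + (a₀ - o₀) + (o₀ - o) := by abel
    rw [hsplit, inner_add_right, inner_add_right, real_inner_self_eq_norm_sq]
    have h1 := hAvar a ha
    have h2 := hOvar o ho
    nlinarith
  -- the optimal direction
  set nv₀ : EuclideanSpace ℝ (Fin 3) := d⁻¹ • (a₀ - o₀) with hnv₀
  have hnorm : ‖nv₀‖ = 1 := by
    rw [hnv₀, norm_smul, norm_inv, Real.norm_eq_abs, abs_of_pos hd, ← hddef,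
      inv_mul_cancel₀ hd.ne']
  have hinner : ∀ a ∈ A, ∀ o ∈ O, d ≤ ⟪nv₀, a - o⟫ := by
    intro a ha o ho
    rw [hnv₀, real_inner_smul_left]
    have := hkey a ha o ho
    rw [le_inv_mul_iff₀ hd]
    nlinarith
  have hinner₀ : ⟪nv₀, a₀ - o₀⟫ = d := by
    rw [hnv₀, real_inner_smul_left, real_inner_self_eq_norm_sq, ← hddef]
    field_simp
  -- sInf of the distance set is d
  have hSinf : sInf {r : ℝ | ∃ a ∈ A, ∃ o ∈ O, r = ‖a - o‖} = d := by
    apply le_antisymm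
    · exact csInf_le ⟨0, by rintro x ⟨a, ha, o, ho, rfl⟩; positivity⟩
        ⟨a₀, ha₀, o₀, ho₀, rfl⟩
    · exact le_csInf ⟨d, a₀, ha₀, o₀, ho₀, rfl⟩
        (by rintro x ⟨a, ha, o, ho, rfl⟩; exact hminAO a ha o ho)
  -- sInf of inner products for nv₀ is d
  have hTinf : sInf {t : ℝ | ∃ a ∈ A, ∃ o ∈ O, t = ⟪nv₀, a - o⟫} = d := by
    apply le_antisymm
    · exact csInf_le ⟨d, by rintro x ⟨a, ha, o, ho, rfl⟩; exact hinner a ha o ho⟩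
        ⟨a₀, ha₀, o₀, ho₀, hinner₀.symm⟩
    · exact le_csInf ⟨⟪nv₀, a₀ - o₀⟫, a₀, ha₀, o₀, ho₀, rfl⟩
        (by rintro x ⟨a, ha, o, ho, rfl⟩; exact hinner a ha o ho)
  -- bounds for arbitrary directions
  obtain ⟨CA, hCA⟩ := hAc.isBounded.exists_norm_le
  obtain ⟨CO, hCO⟩ := hOc.isBounded.exists_norm_le
  have hub : ∀ s ∈ {s : ℝ | ∃ nv : EuclideanSpace ℝ (Fin 3), ‖nv‖ = 1 ∧
      s = sInf {t : ℝ | ∃ a ∈ A, ∃ o ∈ O, t = ⟪nv, a - o⟫}}, s ≤ d := by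
    rintro s ⟨nv, hnv, rfl⟩
    have hbdd : BddBelow {t : ℝ | ∃ a ∈ A, ∃ o ∈ O, t = ⟪nv, a - o⟫} := by
      refine ⟨-(CA + CO), ?_⟩
      rintro x ⟨a, ha, o, ho, rfl⟩
      have h1 : |⟪nv, a - o⟫| ≤ ‖nv‖ * ‖a - o‖ := abs_real_inner_le_norm _ _
      have h2 : ‖a - o‖ ≤ CA + CO := (norm_sub_le a o).trans
        (add_le_add (hCA a ha) (hCO o ho))
      rw [hnv, one_mul] at h1
      have := abs_le.mp (h1.trans h2)
      linarith [this.1]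
    calc sInf {t : ℝ | ∃ a ∈ A, ∃ o ∈ O, t = ⟪nv, a - o⟫}
        ≤ ⟪nv, a₀ - o₀⟫ := csInf_le hbdd ⟨a₀, ha₀, o₀, ho₀, rfl⟩
      _ ≤ ‖nv‖ * ‖a₀ - o₀‖ := real_inner_le_norm _ _
      _ = d := by rw [hnv, one_mul]
  have hSsup : sSup {s : ℝ | ∃ nv : EuclideanSpace ℝ (Fin 3), ‖nv‖ = 1 ∧
      s = sInf {t : ℝ | ∃ a ∈ A, ∃ o ∈ O, t = ⟪nv, a - o⟫}} = d := by
    apply le_antisymm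
    · exact csSup_le ⟨d, nv₀, hnorm, hTinf.symm⟩ hub
    · exact le_csSup ⟨d, hub⟩ ⟨nv₀, hnorm, hTinf.symm⟩
  refine ⟨?_, ?_⟩ <;> rw [hSinf]
  · exact hSsup.symm
  · exact hd
end
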